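/- Let Y_min, Z_max, ε₁, ε₂ be real numbers, and let x, y be real numbers satisfying 0 < Y_min < y - ε₂, 0 ≤ ε₁ ≤ x, 0 ≤ ε₂ ≤ y, and x/y ≤ Z_max. Then for any choice of signs, |x/y - (x ± ε₁)/(y ± ε₂)| ≤ ((Z_max + 1)/Y_min) · max(ε₁, ε₂). -/
import Mathlib


/-- Error propagation in division. -/
theorem div_error_propagation (Ymin Zmax ε₁ ε₂ x y s₁ s₂ : ℝ)
    (hs₁ : s₁ = 1 ∨ s₁ = -1) (hs₂ : s₂ = 1 ∨ s₂ = -1)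
    (hY : 0 < Ymin) (hYy : Ymin < y - ε₂)
    (hε₁ : 0 ≤ ε₁) (hε₁x : ε₁ ≤ x) (hε₂ : 0 ≤ ε₂) (hε₂y : ε₂ ≤ y)
    (hZ : x / y ≤ Zmax) :
    |x / y - (x + s₁ * ε₁) / (y + s₂ * ε₂)| ≤ (Zmax + 1) / Ymin * max ε₁ ε₂ := by
  have hy : 0 < y := by linarith
  have hd : Ymin < y + s₂ * ε₂ := by
    rcases hs₂ with h | h <;> rw [h] <;> nlinarith
  have hd0 : 0 < y + s₂ * ε₂ := hY.trans hd
  have hx0 : 0 ≤ x := le_trans hε₁ hε₁x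
  have hZ0 : 0 ≤ Zmax := le_trans (div_nonneg hx0 hy.le) hZ
  have hxZ : x ≤ Zmax * y := (div_le_iff₀ hy).mp hZ
  have key : x / y - (x + s₁ * ε₁) / (y + s₂ * ε₂)
      = (x * (s₂ * ε₂) - y * (s₁ * ε₁)) / (y * (y + s₂ * ε₂)) := by
    field_simp; ring
  rw [key, abs_div, abs_of_pos (mul_pos hy hd0)]
  have hnum : |x * (s₂ * ε₂) - y * (s₁ * ε₁)| ≤ x * ε₂ + y * ε₁ := by
    rcases hs₁ with h1 | h1 <;> rcases hs₂ with h2 | h2 <;> rw [h1, h2, abs_le] <;>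
      constructor <;> nlinarith [mul_nonneg hx0 hε₂, mul_nonneg hy.le hε₁]
  have hM1 : ε₁ ≤ max ε₁ ε₂ := le_max_left _ _
  have hM2 : ε₂ ≤ max ε₁ ε₂ := le_max_right _ _
  calc |x * (s₂ * ε₂) - y * (s₁ * ε₁)| / (y * (y + s₂ * ε₂))
      ≤ (x * ε₂ + y * ε₁) / (y * (y + s₂ * ε₂)) := by gcongr
    _ ≤ (Zmax * ε₂ + ε₁) / (y + s₂ * ε₂) := by
        rw [div_le_div_iff₀ (mul_pos hy hd0) hd0]
        nlinarith [mul_le_mul_of_nonneg_right (mul_le_mul_of_nonneg_right hxZ hε₂) hd0.le,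
          mul_le_mul_of_nonneg_right (mul_le_mul_of_nonneg_right hε₁x hy.le) hd0.le]
    _ ≤ (Zmax * ε₂ + ε₁) / Ymin := by
        apply div_le_div_of_nonneg_left (by nlinarith) hY hd.le
    _ ≤ (Zmax + 1) / Ymin * max ε₁ ε₂ := by
        rw [div_mul_eq_mul_div, div_le_div_iff₀ hY hY]
        nlinarith [mul_le_mul_of_nonneg_left hM2 hZ0]
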